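/- If H is a graph such that H ∧ K₂ is 3-connected, then H is 2-connected and has minimum degree at least 3. -/

import Mathlib

open SimpleGraph

/-- The Kronecker (tensor/direct) product of two simple graphs. -/
def tensorProd {α β : Type*} (G : SimpleGraph α) (H : SimpleGraph β) :
    SimpleGraph (α × β) where
  Adj a b := G.Adj a.1 b.1 ∧ H.Adj a.2 b.2
  symm := ⟨fun _ _ h => ⟨h.1.symm, h.2.symm⟩⟩
  loopless := ⟨fun _ h => G.irrefl h.1⟩

/-- The complete graph on two vertices. -/
def K2 : SimpleGraph (Fin 2) := ⊤

/-- A graph is `k`-connected if it has more than `k` vertices and removing any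
fewer than `k` vertices leaves a connected graph. -/
def KConnected (k : ℕ) {V : Type*} [Fintype V] (G : SimpleGraph V) : Prop :=
  k < Fintype.card V ∧
    ∀ s : Finset V, s.card < k → (G.induce ((↑s : Set V)ᶜ)).Connected

lemma deg_aux {V : Type*} [Fintype V] [Nonempty V] (H : SimpleGraph V)
    [DecidableRel H.Adj] (h3 : KConnected 3 (tensorProd H K2)) (v : V) :
    3 ≤ H.degree v := by
  classical
  by_contra hlt
  push_neg at hlt
  set s : Finset (V × Fin 2) :=
    (H.neighborFinset v).image (fun w => (w, (1 : Fin 2))) with hs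
  have hcard : s.card < 3 :=
    lt_of_le_of_lt (Finset.card_image_le.trans (le_of_eq (H.card_neighborFinset_eq_degree v)))
      hlt
  have hconn := (h3.2 s hcard)
  have hv0 : ((v, (0 : Fin 2)) : V × Fin 2) ∈ ((↑s : Set (V × Fin 2))ᶜ) := by
    simp [hs]
  have hv1 : ((v, (1 : Fin 2)) : V × Fin 2) ∈ ((↑s : Set (V × Fin 2))ᶜ) := by
    simp [hs]
  obtain ⟨p⟩ := hconn.preconnected ⟨_, hv0⟩ ⟨_, hv1⟩
  cases p with
  | @cons _ b _ hadj p' =>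
    have h1 : (tensorProd H K2).Adj (v, 0) b.val := hadj
    have hb2 : b.val.2 = 1 := by
      have := h1.2
      simp only [K2, top_adj] at this
      omega
    have : b.val ∈ s := by
      refine Finset.mem_image.2 ⟨b.val.1, ?_, ?_⟩
      · rw [SimpleGraph.mem_neighborFinset]; exact h1.1
      · exact Prod.ext rfl hb2.symm
    exact b.property this

/-- If `H ∧ K₂` is 3-connected, then `H` is 2-connected and has minimum
degree at least 3. -/
theorem stmt5 {V : Type*} [Fintype V] [Nonempty V] (H : SimpleGraph V)
    [DecidableRel H.Adj] (h3 : KConnected 3 (tensorProd H K2)) :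
    KConnected 2 H ∧ 3 ≤ H.minDegree := by
  have hdeg : ∀ v, 3 ≤ H.degree v := deg_aux H h3
  have hmin : 3 ≤ H.minDegree :=
    H.le_minDegree_of_forall_le_degree 3 hdeg
  refine ⟨⟨?_, ?_⟩, hmin⟩
  · obtain ⟨v⟩ := ‹Nonempty V›
    have := H.degree_lt_card_verts v
    have := hdeg v
    omega
  · intro s hsc
    set t : Finset (V × Fin 2) := s ×ˢ (Finset.univ : Finset (Fin 2)) with ht
    have htcard : t.card < 3 := by
      rw [ht, Finset.card_product]
      simp only [Finset.card_univ, Fintype.card_fin]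
      omega
    have hconn := h3.2 t htcard
    have hmem : ∀ p : V × Fin 2, p ∈ ((↑t : Set (V × Fin 2))ᶜ) ↔ p.1 ∉ s := by
      intro p
      simp [ht]
    refine SimpleGraph.Connected.map (G := (tensorProd H K2).induce ((↑t : Set (V × Fin 2))ᶜ))
      ⟨fun p => ⟨p.val.1, by
        simpa using (hmem p.val).1 p.property⟩, ?_⟩ ?_ hconn
    · intro a b hab
      exact hab.1
    · intro ⟨w, hw⟩
      refine ⟨⟨(w, 0), (hmem (w, 0)).2 (by simpa using hw)⟩, rfl⟩
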